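/- arXiv:1910.00037 — 2 statements merged into one kernel-verified Lean document; each statement's English description precedes it below -/
import Mathlib

section
/- Let W be a quasi-homogeneous polynomial in C[x_1,...,x_N] with rational weights q_1,...,q_N, i.e., W = ∑_{j=1}^N q_j x_j ∂W/∂x_j. Then in the cohomology of the twisted de Rham complex (Ω*_{C^N}[[u]], dW + u d_{DR}), the class of dx_1∧⋯∧dx_N is an eigenvector of the connection ∇_{u d/du} := u d/du − N/2 − W/u with eigenvalue −c_W/2, where c_W = ∑_{j=1}^N (1 − 2q_j). -/
open MvPolynomial PowerSeries

/-!
Each coordinate contributes a boundary: taking `f = x_j` in the generator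
`∂_j W · f + u · ∂_j f` gives `x_j ∂_j W + u`. Weighting these by `q_j` and summing, the Euler
relation `W = ∑ q_j x_j ∂_j W` turns the sum into `W + (∑ q_j) u`, and
`∑ q_j = N/2 − c_W/2`.
-/

/-- The top-degree boundaries of the twisted de Rham complex `(Ω*_{ℂ^N}[[u]], dW + u d_DR)`,
written in the trivialization `Ω^N[[u]] ≅ ℂ[x][[u]]` by the frame `dx_1 ∧ ⋯ ∧ dx_N`:
the `ℂ`-span of the elements `∂_j W · f + u · ∂_j f` for `j = 1,…,N` and
`f ∈ ℂ[x][[u]]` (here `u = PowerSeries.X` and `∂_j` acts coefficientwise). -/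
noncomputable def twistedBoundaries (N : ℕ) (W : MvPolynomial (Fin N) ℂ) :
    Submodule ℂ (PowerSeries (MvPolynomial (Fin N) ℂ)) :=
  Submodule.span ℂ
    {b | ∃ (j : Fin N) (f : PowerSeries (MvPolynomial (Fin N) ℂ)),
      b = PowerSeries.C (MvPolynomial.pderiv j W) * f +
        PowerSeries.X * PowerSeries.mk fun n => MvPolynomial.pderiv j (PowerSeries.coeff n f)}

theorem PowerSeries.C_smul_of_algebra {R A : Type*} [CommSemiring R] [CommSemiring A]
    [Algebra R A] (c : R) (p : A) :
    PowerSeries.C (c • p) = c • PowerSeries.C p := by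
  rw [Algebra.smul_def, Algebra.smul_def, map_mul, PowerSeries.algebraMap_apply]

theorem PowerSeries.mk_pderiv_coeff_C {σ R : Type*} [CommSemiring R] (i : σ)
    (p : MvPolynomial σ R) :
    PowerSeries.mk (fun n => pderiv i (PowerSeries.coeff n (PowerSeries.C p)))
      = PowerSeries.C (pderiv i p) := by
  ext (_ | n) <;> simp [PowerSeries.coeff_C]

namespace twistedBoundaries

variable {N : ℕ} (W : MvPolynomial (Fin N) ℂ)

theorem generator_mem (j : Fin N) (f : PowerSeries (MvPolynomial (Fin N) ℂ)) :
    PowerSeries.C (pderiv j W) * f +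
        PowerSeries.X * PowerSeries.mk (fun n => pderiv j (PowerSeries.coeff n f))
      ∈ twistedBoundaries N W :=
  Submodule.subset_span ⟨j, f, rfl⟩

theorem C_X_mul_pderiv_add_X_mem (j : Fin N) :
    PowerSeries.C (X j * pderiv j W) + PowerSeries.X ∈ twistedBoundaries N W := by
  have h := generator_mem W j (PowerSeries.C (X j))
  rwa [PowerSeries.mk_pderiv_coeff_C, pderiv_X_self, map_one, mul_one, ← map_mul, mul_comm] at h

end twistedBoundaries

theorem half_card_sub_half_sum_one_sub_two_mul {ι K : Type*} [Fintype ι] [Field K] [CharZero K]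
    (q : ι → K) :
    (Fintype.card ι : K) / 2 - (∑ j, (1 - 2 * q j)) / 2 = ∑ j, q j := by
  rw [Finset.sum_sub_distrib, ← Finset.mul_sum, Finset.sum_const, Finset.card_univ,
    nsmul_eq_mul, mul_one]
  ring

/-- For a quasi-homogeneous polynomial `W = ∑_j q_j x_j ∂_j W`, the class of
`dx_1 ∧ ⋯ ∧ dx_N` in the twisted de Rham cohomology is an eigenvector of
`∇_{u d/du} = u d/du − N/2 − W/u` with eigenvalue `−c_W/2`, `c_W = ∑_j (1 − 2 q_j)`.
Multiplying the eigenvector equation by `u`, this says exactly that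
`W + (N/2 − c_W/2)·u` (equivalently `W + (∑_j q_j)·u`) is a boundary. -/
theorem quasihomogeneous_top_form_eigenvector (N : ℕ) (W : MvPolynomial (Fin N) ℂ)
    (q : Fin N → ℂ) (cW : ℂ)
    (hW : W = ∑ j, q j • (MvPolynomial.X j * MvPolynomial.pderiv j W))
    (hcW : cW = ∑ j, (1 - 2 * q j)) :
    PowerSeries.C W + ((N : ℂ) / 2 - cW / 2) •
        (PowerSeries.X : PowerSeries (MvPolynomial (Fin N) ℂ))
      ∈ twistedBoundaries N W := by
  have hsum : (N : ℂ) / 2 - cW / 2 = ∑ j, q j := by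
    simpa [hcW] using half_card_sub_half_sum_one_sub_two_mul q
  have heq : PowerSeries.C W + ((N : ℂ) / 2 - cW / 2) •
        (PowerSeries.X : PowerSeries (MvPolynomial (Fin N) ℂ))
      = ∑ j, q j • (PowerSeries.C (X j * pderiv j W) + PowerSeries.X) := by
    conv_lhs => rw [hW, hsum]
    simp only [map_sum, PowerSeries.C_smul_of_algebra, smul_add, Finset.sum_add_distrib,
      Finset.sum_smul]
  rw [heq]
  exact Submodule.sum_mem _ fun j _ =>
    Submodule.smul_mem _ _ (twistedBoundaries.C_X_mul_pderiv_add_X_mem W j)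
end

section
/- Let W = (1/5)(x_1^5+⋯+x_5^5) − ψ x_1x_2x_3x_4x_5 and n ≥ 5. Then in the cohomology of (Ω*_{C^5}[[u]], dW + u d_{DR}), one has [(x_1x_2x_3x_4x_5)^n dx_1⋯dx_5] = −u^5 (n−4)^5 [(x_1x_2x_3x_4x_5)^{n−5} dx_1⋯dx_5], assuming ψ = 0 (Fermat quintic W = (1/5)∑ x_j^5). -/
/-! Since `∂_j W = x_j^4`, the boundary `∂_j W · f + u ∂_j f` of `f = u^k x_j^(a+1) g`, with `g`
free of `x_j`, gives `u^k x_j^(a+5) g ≡ -(a+1) u^(k+1) x_j^a g` modulo boundaries. Doing this once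
in each of the five variables lowers every exponent of `(x_1⋯x_5)^n` by `5` and produces the factor
`-(n-4)` five times. -/

open MvPolynomial PowerSeries

/-- Top-degree boundaries of the twisted de Rham complex `(Ω*_{ℂ^5}[[u]], dW + u d_DR)`,
in the trivialization of `Ω^5[[u]]` by `dx_1⋯dx_5`: the `ℂ`-span of
`∂_j W · f + u · ∂_j f` (`u = PowerSeries.X`, `∂_j` acting coefficientwise). -/
noncomputable def quinticBoundaries (W : MvPolynomial (Fin 5) ℂ) :
    Submodule ℂ (PowerSeries (MvPolynomial (Fin 5) ℂ)) :=
  Submodule.span ℂ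
    {b | ∃ (j : Fin 5) (f : PowerSeries (MvPolynomial (Fin 5) ℂ)),
      b = PowerSeries.C (MvPolynomial.pderiv j W) * f +
        PowerSeries.X * PowerSeries.mk fun n => MvPolynomial.pderiv j (PowerSeries.coeff n f)}

theorem C_pderiv_mul_mul_X_pow_smodEq (W m : MvPolynomial (Fin 5) ℂ) (j : Fin 5) (k : ℕ) :
    PowerSeries.C (pderiv j W * m) * PowerSeries.X ^ k ≡
      -(PowerSeries.C (pderiv j m) * PowerSeries.X ^ (k + 1)) [SMOD quinticBoundaries W] := by
  rw [SModEq.sub_mem, sub_neg_eq_add]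
  refine Submodule.subset_span ⟨j, PowerSeries.C m * PowerSeries.X ^ k, ?_⟩
  have hcoeff : (PowerSeries.mk fun n =>
      pderiv j (PowerSeries.coeff n (PowerSeries.C m * PowerSeries.X ^ k))) =
        PowerSeries.C (pderiv j m) * PowerSeries.X ^ k := by
    ext n
    simp only [PowerSeries.coeff_mk, PowerSeries.coeff_C_mul_X_pow]
    split_ifs <;> simp
  rw [hcoeff, map_mul]
  ring

theorem C_monomial_add_single_smodEq {W : MvPolynomial (Fin 5) ℂ} {j : Fin 5}
    (hW : pderiv j W = MvPolynomial.X j ^ 4) (s : Fin 5 →₀ ℕ) (c : ℂ) (k : ℕ) :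
    PowerSeries.C (MvPolynomial.monomial (s + Finsupp.single j 5) c) * PowerSeries.X ^ k ≡
      PowerSeries.C (MvPolynomial.monomial s (-((s j + 1 : ℕ) : ℂ) * c)) * PowerSeries.X ^ (k + 1)
        [SMOD quinticBoundaries W] := by
  have hmul : pderiv j W * MvPolynomial.monomial (s + Finsupp.single j 1) c =
      MvPolynomial.monomial (s + Finsupp.single j 5) c := by
    rw [hW, X_pow_eq_monomial, monomial_mul, one_mul, add_comm, add_assoc, ← Finsupp.single_add]
  have hderiv : pderiv j (MvPolynomial.monomial (s + Finsupp.single j 1) c) =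
      MvPolynomial.monomial s (((s j + 1 : ℕ) : ℂ) * c) := by
    simp [mul_comm]
  have h := C_pderiv_mul_mul_X_pow_smodEq W
    (MvPolynomial.monomial (s + Finsupp.single j 1) c) j k
  rw [hmul, hderiv] at h
  rwa [neg_mul, map_neg, map_neg, neg_mul]

theorem pderiv_fermatQuintic (j : Fin 5) :
    pderiv j (MvPolynomial.C (1 / 5 : ℂ) * ∑ i, MvPolynomial.X i ^ 5) = MvPolynomial.X j ^ 4 := by
  simp [pderiv_X, Pi.single_apply]
  rw [← mul_assoc, ← map_ofNat MvPolynomial.C 5, ← MvPolynomial.C_mul]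
  norm_num

theorem C_monomial_add_sum_single_smodEq {W : MvPolynomial (Fin 5) ℂ}
    (hW : ∀ j, pderiv j W = MvPolynomial.X j ^ 4) (s : Fin 5 →₀ ℕ) (T : Finset (Fin 5)) (c : ℂ)
    (k : ℕ) :
    PowerSeries.C (MvPolynomial.monomial (s + ∑ i ∈ T, Finsupp.single i 5) c) * PowerSeries.X ^ k ≡
      PowerSeries.C (MvPolynomial.monomial s ((∏ i ∈ T, -((s i + 1 : ℕ) : ℂ)) * c)) *
        PowerSeries.X ^ (k + T.card) [SMOD quinticBoundaries W] := by
  induction T using Finset.induction_on generalizing s k with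
  | empty => simp
  | insert j T hj ih =>
    have hs : ∀ i ∈ T, (s + Finsupp.single j 5 : Fin 5 →₀ ℕ) i = s i := fun i hi => by
      simp [ne_of_mem_of_not_mem hi hj |>.symm]
    rw [Finset.sum_insert hj, ← add_assoc]
    refine (ih _ k).trans ?_
    rw [Finset.prod_congr rfl fun i hi => by rw [hs i hi], Finset.prod_insert hj,
      Finset.card_insert_of_notMem hj, ← add_assoc]
    simpa only [mul_assoc] using C_monomial_add_single_smodEq (hW j) s _ _

theorem prod_X_pow_eq_monomial_sum_single {σ R : Type*} [Fintype σ] [CommSemiring R] (e : ℕ) :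
    (∏ j, MvPolynomial.X j : MvPolynomial σ R) ^ e =
      MvPolynomial.monomial (∑ j, Finsupp.single j e) 1 := by
  simp [MvPolynomial.monomial_sum_one, ← X_pow_eq_monomial, Finset.prod_pow]

/-- For the Fermat quintic `W = (1/5)(x_1^5 + ⋯ + x_5^5)` and `n ≥ 5`, in the
cohomology of `(Ω*_{ℂ^5}[[u]], dW + u d_DR)` one has
`[(x_1⋯x_5)^n dx_1⋯dx_5] = −u^5 (n−4)^5 [(x_1⋯x_5)^{n−5} dx_1⋯dx_5]`, i.e.
`(x_1⋯x_5)^n + (n−4)^5 u^5 (x_1⋯x_5)^{n−5}` is a boundary. -/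
theorem quintic_reduction (n : ℕ) (hn : 5 ≤ n) :
    PowerSeries.C ((∏ j, MvPolynomial.X j : MvPolynomial (Fin 5) ℂ) ^ n) +
      ((n : ℂ) - 4) ^ 5 • (PowerSeries.X ^ 5 *
        PowerSeries.C ((∏ j, MvPolynomial.X j : MvPolynomial (Fin 5) ℂ) ^ (n - 5)))
      ∈ quinticBoundaries
          (MvPolynomial.C (1 / 5 : ℂ) * ∑ j, MvPolynomial.X j ^ 5) := by
  obtain ⟨m, rfl⟩ : ∃ m, n = m + 5 := ⟨n - 5, by omega⟩
  have key := C_monomial_add_sum_single_smodEq pderiv_fermatQuintic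
    (∑ j, Finsupp.single j m) Finset.univ 1 0
  rw [← Finset.sum_add_distrib] at key
  simp only [← Finsupp.single_add, Finsupp.finsetSum_apply, Finsupp.single_apply,
    Finset.sum_ite_eq', Finset.mem_univ, if_true, Finset.prod_const, Finset.card_univ,
    Fintype.card_fin, mul_one, pow_zero, zero_add] at key
  rw [← sub_neg_eq_add, ← SModEq.sub_mem, add_tsub_cancel_right,
    prod_X_pow_eq_monomial_sum_single, prod_X_pow_eq_monomial_sum_single]
  convert key using 1
  rw [show ((m + 5 : ℕ) : ℂ) - 4 = (m + 1 : ℕ) by push_cast; ring, ← mul_one ((-_ : ℂ) ^ 5),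
    ← MvPolynomial.C_mul_monomial, Algebra.smul_def]
  simp only [PowerSeries.algebraMap_apply, MvPolynomial.algebraMap_eq, map_mul, map_pow, map_neg]
  ring
end
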